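/- (Same-ray lemma, convexity argument implicit in the Remainder Lemma.) Assume the avoidance hypothesis. Then for every u ∈ ℝ² with ‖u‖ ≤ 1, if ((x+Eu)₂ − b)·(x₁ − a) = ((x+Eu)₁ − a)·(x₂ − b) (i.e. (x+Eu) − o and x − o are parallel), then there exists a real t > 0 with (x + Eu) − o = t·(x − o). -/

import Mathlib

/-! The parallelism condition makes `(x + Eu) - o` a multiple `t • (x - o)`, since `x ≠ o`.
If `t ≤ 0`, then `o` lies on the segment from `x` to `x + Eu`; that segment is the image of the
segment from `0` to `u` and so lies in the ellipsoid, while `o` itself is on the radial. -/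

noncomputable section

/-- The sensor location `o = (a, b)`. -/
def oPt (a b : ℝ) : EuclideanSpace ℝ (Fin 2) := WithLp.toLp 2 ![a, b]

/-- Matrix–vector multiplication, viewed as a map on the Euclidean plane. -/
def mv (M : Matrix (Fin 2) (Fin 2) ℝ) (u : EuclideanSpace ℝ (Fin 2)) :
    EuclideanSpace ℝ (Fin 2) := WithLp.toLp 2 (M.mulVec u)

theorem exists_eq_smul_of_cross_eq_zero {p q : EuclideanSpace ℝ (Fin 2)} (hp : p ≠ 0)
    (hpq : q 1 * p 0 = q 0 * p 1) : ∃ t : ℝ, q = t • p := by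
  by_cases hp0 : p 0 = 0
  · have hp1 : p 1 ≠ 0 := fun hp1 => hp (by ext i; fin_cases i <;> simp [hp0, hp1])
    refine ⟨q 1 / p 1, ?_⟩
    ext i; fin_cases i
    · simp only [Fin.zero_eta, PiLp.smul_apply, smul_eq_mul]
      field_simp
      simpa [hp0] using hpq.symm
    · simp [hp1]
  · refine ⟨q 0 / p 0, ?_⟩
    ext i; fin_cases i
    · simp [hp0]
    · simp only [Fin.mk_one, PiLp.smul_apply, smul_eq_mul]
      field_simp
      linarith

theorem mem_segment_of_sub_eq_smul_sub {V : Type*} [AddCommGroup V] [Module ℝ V] {o x y : V}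
    {t : ℝ} (h : y - o = t • (x - o)) (ht : t ≤ 0) : o ∈ segment ℝ x y := by
  rw [mem_segment_iff_sameRay, h, ← neg_sub o x, smul_neg, ← neg_smul]
  exact SameRay.sameRay_nonneg_smul_right _ (neg_nonneg.2 ht)

theorem exists_norm_le_one_of_mem_segment_add {V W : Type*} [SeminormedAddCommGroup V]
    [NormedSpace ℝ V] [AddCommGroup W] [Module ℝ W] (f : V →ₗ[ℝ] W) {x z : W} {u : V}
    (hu : ‖u‖ ≤ 1) (hz : z ∈ segment ℝ x (x + f u)) : ∃ v : V, ‖v‖ ≤ 1 ∧ x + f v = z := by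
  rw [segment_eq_image'] at hz
  obtain ⟨θ, ⟨hθ0, hθ1⟩, rfl⟩ := hz
  refine ⟨θ • u, ?_, by simp⟩
  rw [norm_smul, Real.norm_of_nonneg hθ0]
  exact mul_le_one₀ hθ1 (norm_nonneg u) hu

theorem same_ray_of_parallel_general
    (a b : ℝ) (x : EuclideanSpace ℝ (Fin 2)) (E : Matrix (Fin 2) (Fin 2) ℝ)
    (havoid : ∀ u : EuclideanSpace ℝ (Fin 2), ‖u‖ ≤ 1 →
      ¬((x + mv E u) 0 ≤ a ∧ (x + mv E u) 1 = b)) :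
    ∀ u : EuclideanSpace ℝ (Fin 2), ‖u‖ ≤ 1 →
      ((x + mv E u) 1 - b) * (x 0 - a) = ((x + mv E u) 0 - a) * (x 1 - b) →
        ∃ t : ℝ, 0 < t ∧
          (x + mv E u) - oPt a b =
            t • (x - oPt a b) := by
  intro u hu hpar
  have hne : ∀ v : EuclideanSpace ℝ (Fin 2), ‖v‖ ≤ 1 → x + mv E v ≠ oPt a b :=
    fun v hv h => havoid v hv (by simp [h, oPt])
  have hp : x - oPt a b ≠ 0 := sub_ne_zero.2 (by simpa [mv] using hne 0 (by simp))
  obtain ⟨t, ht⟩ := exists_eq_smul_of_cross_eq_zero (q := x + mv E u - oPt a b) hp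
    (by simpa [oPt] using hpar)
  refine ⟨t, lt_of_not_ge fun ht0 => ?_, ht⟩
  obtain ⟨v, hv, hvo⟩ := exists_norm_le_one_of_mem_segment_add (Matrix.toEuclideanLin E) hu
    (mem_segment_of_sub_eq_smul_sub ht ht0)
  exact hne v hv hvo

/-- **Same-ray lemma.** Under the avoidance hypothesis, if `(x+Eu) − o` is parallel to
`x − o` then the two vectors are positively proportional. -/
theorem same_ray_of_parallel
    (a b : ℝ) (x : EuclideanSpace ℝ (Fin 2)) (E : Matrix (Fin 2) (Fin 2) ℝ)
    (hE : 0 < E.det)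
    (havoid : ∀ u : EuclideanSpace ℝ (Fin 2), ‖u‖ ≤ 1 →
      ¬((x + mv E u) 0 ≤ a ∧ (x + mv E u) 1 = b)) :
    ∀ u : EuclideanSpace ℝ (Fin 2), ‖u‖ ≤ 1 →
      ((x + mv E u) 1 - b) * (x 0 - a) = ((x + mv E u) 0 - a) * (x 1 - b) →
        ∃ t : ℝ, 0 < t ∧
          (x + mv E u) - oPt a b =
            t • (x - oPt a b) :=
  same_ray_of_parallel_general a b x E havoid
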